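/- (Decomposition of the test-score regression coefficient.) Fix integers t and ℓ ≥ 0. Suppose cov(θ_t, η_t) = 0, cov(θ_{t+ℓ}, η_t) = 0, cov(ε_{t+ℓ}, θ_t) = 0, cov(ε_{t+ℓ}, η_t) = 0, τ ≠ 0, and Var(θ_t) > 0. Then Var(T̃_t) = τ²·Var(θ_t) + Var(η_t) > 0 and the population regression coefficient of w_{t+ℓ} on T̃_t satisfies cov(w_{t+ℓ}, T̃_t) / Var(T̃_t) = (μ_{t+ℓ}/τ) · ( 1 + cov(θ_{t+ℓ} − θ_t, θ_t) / Var(θ_t) ) · ( τ²·Var(θ_t) / (τ²·Var(θ_t) + Var(η_t)) ). -/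

import Mathlib

open MeasureTheory ProbabilityTheory

/-- Covariance of two real-valued random variables under measure `P`. -/
noncomputable def cov {Ω : Type*} [MeasurableSpace Ω] (P : Measure Ω) (X Y : Ω → ℝ) : ℝ :=
  ∫ ω, (X ω - ∫ a, X a ∂P) * (Y ω - ∫ a, Y a ∂P) ∂P

/-- Variance of a real-valued random variable under measure `P`. -/
noncomputable def Var {Ω : Type*} [MeasurableSpace Ω] (P : Measure Ω) (X : Ω → ℝ) : ℝ :=
  cov P X X

/-!
Substituting `w = μ θ' + ε` and `T̃ = τ θ + η` and expanding bilinearly, the orthogonality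
assumptions kill every cross term: `Var T̃ = τ² Var θ + Var η` and `cov(w, T̃) = μ τ cov(θ', θ)`.
Writing `cov(θ', θ) = Var θ + cov(θ' - θ, θ)`, the stated factorisation is then field arithmetic.
-/

section Covariance

variable {Ω : Type*} [MeasurableSpace Ω] {P : Measure Ω}

theorem cov_eq_covariance (X Y : Ω → ℝ) : cov P X Y = cov[X, Y; P] := rfl

theorem Var_nonneg (X : Ω → ℝ) : 0 ≤ Var P X :=
  integral_nonneg fun _ => mul_self_nonneg _

variable [IsFiniteMeasure P]

theorem cov_const_mul_add_const_mul_add {X Y Z W : Ω → ℝ} (a b : ℝ)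
    (hX : MemLp X 2 P) (hY : MemLp Y 2 P) (hZ : MemLp Z 2 P) (hW : MemLp W 2 P) :
    cov P (fun ω => a * X ω + Y ω) (fun ω => b * Z ω + W ω) =
      a * b * cov P X Z + a * cov P X W + b * cov P Y Z + cov P Y W := by
  change cov[(fun ω => a * X ω) + Y, (fun ω => b * Z ω) + W; P] =
    a * b * cov[X, Z; P] + a * cov[X, W; P] + b * cov[Y, Z; P] + cov[Y, W; P]
  rw [covariance_add_left (hX.const_mul a) hY ((hZ.const_mul b).add hW),
    covariance_add_right (hX.const_mul a) (hZ.const_mul b) hW,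
    covariance_add_right hY (hZ.const_mul b) hW, covariance_const_mul_left,
    covariance_const_mul_left, covariance_const_mul_right, covariance_const_mul_right]
  ring

theorem cov_const_mul_add_of_uncorrelated {X Y U V : Ω → ℝ} (a b : ℝ)
    (hX : MemLp X 2 P) (hY : MemLp Y 2 P) (hU : MemLp U 2 P) (hV : MemLp V 2 P)
    (hXV : cov P X V = 0) (hUY : cov P U Y = 0) (hUV : cov P U V = 0) :
    cov P (fun ω => a * X ω + U ω) (fun ω => b * Y ω + V ω) = a * b * cov P X Y := by
  rw [cov_const_mul_add_const_mul_add a b hX hU hY hV, hXV, hUY, hUV]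
  ring

theorem Var_const_mul_add_of_uncorrelated {X U : Ω → ℝ} (a : ℝ)
    (hX : MemLp X 2 P) (hU : MemLp U 2 P) (hXU : cov P X U = 0) :
    Var P (fun ω => a * X ω + U ω) = a ^ 2 * Var P X + Var P U := by
  have hUX : cov P U X = 0 := by rw [cov_eq_covariance, covariance_comm]; exact hXU
  rw [Var, cov_const_mul_add_const_mul_add a a hX hU hX hU, hXU, hUX, Var, Var]
  ring

theorem cov_sub_left_self {X Y : Ω → ℝ} (hX : MemLp X 2 P) (hY : MemLp Y 2 P) :
    cov P (fun ω => Y ω - X ω) X = cov P Y X - Var P X :=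
  covariance_fun_sub_left hY hX hX

end Covariance

theorem regression_coefficient_factorization {m τ c v n : ℝ} (hτ : τ ≠ 0) (hv : v ≠ 0)
    (hden : τ ^ 2 * v + n ≠ 0) :
    m * τ * c / (τ ^ 2 * v + n) = (m / τ) * (1 + (c - v) / v) * (τ ^ 2 * v / (τ ^ 2 * v + n)) := by
  field_simp
  ring

theorem test_score_regression_decomposition_general
    {Ω : Type*} [MeasurableSpace Ω] (P : Measure Ω) [IsProbabilityMeasure P]
    (θ ε : ℤ → Ω → ℝ) (μ : ℤ → ℝ) (w : ℤ → Ω → ℝ)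
    (hθ : ∀ t, MemLp (θ t) 2 P) (hε : ∀ t, MemLp (ε t) 2 P)
    (hw : ∀ t ω, w t ω = μ t * θ t ω + ε t ω)
    (τ : ℝ) (η : ℤ → Ω → ℝ) (hη : ∀ t, MemLp (η t) 2 P)
    (T : ℤ → Ω → ℝ) (hT : ∀ t ω, T t ω = τ * θ t ω + η t ω)
    (t ℓ : ℤ)
    (h1 : cov P (θ t) (η t) = 0)
    (h2 : cov P (θ (t + ℓ)) (η t) = 0)
    (h3 : cov P (ε (t + ℓ)) (θ t) = 0)
    (h4 : cov P (ε (t + ℓ)) (η t) = 0)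
    (hτ : τ ≠ 0) (hVθ : 0 < Var P (θ t)) :
    Var P (T t) = τ ^ 2 * Var P (θ t) + Var P (η t) ∧
      0 < Var P (T t) ∧
      cov P (w (t + ℓ)) (T t) / Var P (T t) =
        (μ (t + ℓ) / τ) *
          (1 + cov P (fun ω => θ (t + ℓ) ω - θ t ω) (θ t) / Var P (θ t)) *
          (τ ^ 2 * Var P (θ t) / (τ ^ 2 * Var P (θ t) + Var P (η t))) := by
  have hTt : T t = fun ω => τ * θ t ω + η t ω := funext (hT t)
  have hwt : w (t + ℓ) = fun ω => μ (t + ℓ) * θ (t + ℓ) ω + ε (t + ℓ) ω := funext (hw (t + ℓ))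
  have hVarT : Var P (T t) = τ ^ 2 * Var P (θ t) + Var P (η t) := by
    rw [hTt, Var_const_mul_add_of_uncorrelated τ (hθ t) (hη t) h1]
  have hVarT_pos : 0 < Var P (T t) := by
    rw [hVarT]
    exact add_pos_of_pos_of_nonneg (by positivity) (Var_nonneg _)
  have hcov : cov P (w (t + ℓ)) (T t) = μ (t + ℓ) * τ * cov P (θ (t + ℓ)) (θ t) := by
    rw [hwt, hTt, cov_const_mul_add_of_uncorrelated _ _ (hθ _) (hθ t) (hε _) (hη t) h2 h3 h4]
  refine ⟨hVarT, hVarT_pos, ?_⟩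
  rw [hcov, cov_sub_left_self (hθ t) (hθ (t + ℓ)), hVarT]
  exact regression_coefficient_factorization hτ hVθ.ne' (hVarT ▸ hVarT_pos.ne')

/-- Decomposition of the test-score regression coefficient: the population regression
coefficient of `w (t+ℓ)` on the test-score residual `T̃ t` equals `(μ (t+ℓ)/τ)` times a
skill-dynamics term times the test reliability ratio. -/
theorem test_score_regression_decomposition
    {Ω : Type*} [MeasurableSpace Ω] (P : Measure Ω) [IsProbabilityMeasure P]
    (θ ε : ℤ → Ω → ℝ) (μ : ℤ → ℝ) (w : ℤ → Ω → ℝ)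
    (hθ : ∀ t, MemLp (θ t) 2 P) (hε : ∀ t, MemLp (ε t) 2 P)
    (hw : ∀ t ω, w t ω = μ t * θ t ω + ε t ω)
    (τ : ℝ) (η : ℤ → Ω → ℝ) (hη : ∀ t, MemLp (η t) 2 P)
    (T : ℤ → Ω → ℝ) (hT : ∀ t ω, T t ω = τ * θ t ω + η t ω)
    (t ℓ : ℤ) (hℓ : 0 ≤ ℓ)
    (h1 : cov P (θ t) (η t) = 0)
    (h2 : cov P (θ (t + ℓ)) (η t) = 0)
    (h3 : cov P (ε (t + ℓ)) (θ t) = 0)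
    (h4 : cov P (ε (t + ℓ)) (η t) = 0)
    (hτ : τ ≠ 0) (hVθ : 0 < Var P (θ t)) :
    Var P (T t) = τ ^ 2 * Var P (θ t) + Var P (η t) ∧
      0 < Var P (T t) ∧
      cov P (w (t + ℓ)) (T t) / Var P (T t) =
        (μ (t + ℓ) / τ) *
          (1 + cov P (fun ω => θ (t + ℓ) ω - θ t ω) (θ t) / Var P (θ t)) *
          (τ ^ 2 * Var P (θ t) / (τ ^ 2 * Var P (θ t) + Var P (η t))) :=
  test_score_regression_decomposition_general P θ ε μ w hθ hε hw τ η hη T hT t ℓ h1 h2 h3 h4 hτ hVθ
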